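/- arXiv:0902.1877 — 2 statements merged into one kernel-verified Lean document; each statement's English description precedes it below -/
import Mathlib

section
/- Under hypothesis (H1), the time-independent function (x,t) ↦ κ_opt(x) is an entropy solution of the discontinuous-flux Buckley–Leverett problem with initial datum κ_opt, i.e. it satisfies the weak formulation, the interior Kruzhkov entropy inequalities in each Ω_i × (0,T), and the interface entropy inequality relative to κ_opt. -/
open MeasureTheory Set Filter Topology
open scoped ENNReal NNReal

noncomputable section

/-- Partial derivative in time of a function `ψ : ℝ → ℝ → ℝ` of (space, time). -/
def pt (ψ : ℝ → ℝ → ℝ) (x t : ℝ) : ℝ := deriv (fun s => ψ x s) t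

/-- Partial derivative in space of a function `ψ : ℝ → ℝ → ℝ` of (space, time). -/
def px (ψ : ℝ → ℝ → ℝ) (x t : ℝ) : ℝ := deriv (fun y => ψ y t) x

/-- A smooth compactly supported test function on `ℝ × [0,T)` whose support is contained
in `S × (-∞, T)`. -/
def IsTest (T : ℝ) (S : Set ℝ) (ψ : ℝ → ℝ → ℝ) : Prop :=
  ContDiff ℝ (⊤ : ℕ∞) (fun p : ℝ × ℝ => ψ p.1 p.2) ∧
  HasCompactSupport (fun p : ℝ × ℝ => ψ p.1 p.2) ∧
  ∀ x t : ℝ, ψ x t ≠ 0 → x ∈ S ∧ t < T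

/-- Kruzhkov entropy flux `F(a,b) = sign(a-b) (f(a) - f(b))`. -/
def Fent (f : ℝ → ℝ) (a b : ℝ) : ℝ := Real.sign (a - b) * (f a - f b)

/-- The optimal connection steady state `κ_opt`. -/
def kopt (f₁ f₂ : ℝ → ℝ) (b₁ b₂ : ℝ) (x : ℝ) : ℝ :=
  if f₁ b₁ ≤ f₂ b₂ then
    (if 0 < x then b₂ else sInf {ν ∈ Icc (0:ℝ) 1 | f₁ ν = f₂ b₂})
  else
    (if x < 0 then b₁ else sSup {ν ∈ Icc (0:ℝ) 1 | f₂ ν = f₁ b₁})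

/-- Entropy solution of the discontinuous-flux Buckley--Leverett problem
`∂_t u + ∂_x f_i(u) = 0` in `Ω_i × (0,T)`, `u(·,0) = u₀`, with flux continuity at `x = 0`,
selected by the optimal interface entropy condition. -/
def IsEntropySol (f₁ f₂ : ℝ → ℝ) (b₁ b₂ T : ℝ) (u₀ : ℝ → ℝ) (u : ℝ → ℝ → ℝ) : Prop :=
  -- (1) L^∞ bounds
  (∀ᵐ p : ℝ × ℝ, p.2 ∈ Ioo 0 T → u p.1 p.2 ∈ Icc (0:ℝ) 1) ∧
  -- (2) weak formulation
  (∀ ψ : ℝ → ℝ → ℝ, IsTest T univ ψ →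
    (∫ t in Ioo (0:ℝ) T, ∫ x : ℝ, u x t * pt ψ x t) + (∫ x : ℝ, u₀ x * ψ x 0)
    + (∫ t in Ioo (0:ℝ) T, ∫ x in Iio (0:ℝ), f₁ (u x t) * px ψ x t)
    + (∫ t in Ioo (0:ℝ) T, ∫ x in Ioi (0:ℝ), f₂ (u x t) * px ψ x t) = 0) ∧
  -- (3) interior Kruzhkov entropy inequalities in Ω₁
  (∀ ψ : ℝ → ℝ → ℝ, IsTest T (Iio 0) ψ → (∀ x t : ℝ, 0 ≤ ψ x t) → ∀ κ ∈ Icc (0:ℝ) 1,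
    0 ≤ (∫ t in Ioo (0:ℝ) T, ∫ x in Iio (0:ℝ), |u x t - κ| * pt ψ x t)
      + (∫ x in Iio (0:ℝ), |u₀ x - κ| * ψ x 0)
      + (∫ t in Ioo (0:ℝ) T, ∫ x in Iio (0:ℝ), Fent f₁ (u x t) κ * px ψ x t)) ∧
  -- (3) interior Kruzhkov entropy inequalities in Ω₂
  (∀ ψ : ℝ → ℝ → ℝ, IsTest T (Ioi 0) ψ → (∀ x t : ℝ, 0 ≤ ψ x t) → ∀ κ ∈ Icc (0:ℝ) 1,
    0 ≤ (∫ t in Ioo (0:ℝ) T, ∫ x in Ioi (0:ℝ), |u x t - κ| * pt ψ x t)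
      + (∫ x in Ioi (0:ℝ), |u₀ x - κ| * ψ x 0)
      + (∫ t in Ioo (0:ℝ) T, ∫ x in Ioi (0:ℝ), Fent f₂ (u x t) κ * px ψ x t)) ∧
  -- (4) interface entropy inequality relative to κ_opt
  (∀ ψ : ℝ → ℝ → ℝ, IsTest T univ ψ → (∀ x t : ℝ, 0 ≤ ψ x t) →
    0 ≤ (∫ t in Ioo (0:ℝ) T, ∫ x : ℝ, |u x t - kopt f₁ f₂ b₁ b₂ x| * pt ψ x t)
      + (∫ x : ℝ, |u₀ x - kopt f₁ f₂ b₁ b₂ x| * ψ x 0)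
      + (∫ t in Ioo (0:ℝ) T, ∫ x in Iio (0:ℝ),
          Fent f₁ (u x t) (kopt f₁ f₂ b₁ b₂ x) * px ψ x t)
      + (∫ t in Ioo (0:ℝ) T, ∫ x in Ioi (0:ℝ),
          Fent f₂ (u x t) (kopt f₁ f₂ b₁ b₂ x) * px ψ x t))

/-- `u ∈ C([0,T]; L¹_loc(ℝ))`. -/
def ContL1loc (T : ℝ) (u : ℝ → ℝ → ℝ) : Prop :=
  ∀ R > (0:ℝ), ∀ t₀ ∈ Icc (0:ℝ) T,
    Tendsto (fun t => ∫ x in Ioo (-R) R, |u x t - u x t₀|) (𝓝[Icc (0:ℝ) T] t₀) (𝓝 0)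

section Aux
variable {ψ : ℝ → ℝ → ℝ}

lemma hasDerivAt_slice_t (h : ContDiff ℝ (⊤ : ℕ∞) (fun p : ℝ × ℝ => ψ p.1 p.2)) (x t : ℝ) :
    HasDerivAt (fun s => ψ x s)
      (fderiv ℝ (fun p : ℝ × ℝ => ψ p.1 p.2) (x, t) (0, 1)) t := by
  have hd := (h.differentiable (by simp) (x, t)).hasFDerivAt
  have h2 : HasDerivAt (fun s : ℝ => ((x, s) : ℝ × ℝ)) ((0 : ℝ), (1 : ℝ)) t :=
    (hasDerivAt_const t x).prodMk (hasDerivAt_id t)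
  exact hd.comp_hasDerivAt t h2

lemma hasDerivAt_slice_x (h : ContDiff ℝ (⊤ : ℕ∞) (fun p : ℝ × ℝ => ψ p.1 p.2)) (x t : ℝ) :
    HasDerivAt (fun y => ψ y t)
      (fderiv ℝ (fun p : ℝ × ℝ => ψ p.1 p.2) (x, t) (1, 0)) x := by
  have hd := (h.differentiable (by simp) (x, t)).hasFDerivAt
  have h2 : HasDerivAt (fun y : ℝ => ((y, t) : ℝ × ℝ)) ((1 : ℝ), (0 : ℝ)) x :=
    (hasDerivAt_id x).prodMk (hasDerivAt_const x t)
  exact hd.comp_hasDerivAt x h2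

lemma pt_eq (h : ContDiff ℝ (⊤ : ℕ∞) (fun p : ℝ × ℝ => ψ p.1 p.2)) (x t : ℝ) :
    pt ψ x t = fderiv ℝ (fun p : ℝ × ℝ => ψ p.1 p.2) (x, t) (0, 1) :=
  (hasDerivAt_slice_t h x t).deriv

lemma px_eq (h : ContDiff ℝ (⊤ : ℕ∞) (fun p : ℝ × ℝ => ψ p.1 p.2)) (x t : ℝ) :
    px ψ x t = fderiv ℝ (fun p : ℝ × ℝ => ψ p.1 p.2) (x, t) (1, 0) :=
  (hasDerivAt_slice_x h x t).deriv

lemma cont_fderiv_apply (h : ContDiff ℝ (⊤ : ℕ∞) (fun p : ℝ × ℝ => ψ p.1 p.2)) (v : ℝ × ℝ) :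
    Continuous fun p : ℝ × ℝ => fderiv ℝ (fun p : ℝ × ℝ => ψ p.1 p.2) p v :=
  (h.continuous_fderiv (by simp)).clm_apply continuous_const

lemma cont_pt (h : ContDiff ℝ (⊤ : ℕ∞) (fun p : ℝ × ℝ => ψ p.1 p.2)) :
    Continuous fun p : ℝ × ℝ => pt ψ p.1 p.2 := by
  have : (fun p : ℝ × ℝ => pt ψ p.1 p.2)
      = fun p : ℝ × ℝ => fderiv ℝ (fun p : ℝ × ℝ => ψ p.1 p.2) p (0, 1) :=
    funext fun p => pt_eq h p.1 p.2
  rw [this]; exact cont_fderiv_apply h _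

lemma cont_px (h : ContDiff ℝ (⊤ : ℕ∞) (fun p : ℝ × ℝ => ψ p.1 p.2)) :
    Continuous fun p : ℝ × ℝ => px ψ p.1 p.2 := by
  have : (fun p : ℝ × ℝ => px ψ p.1 p.2)
      = fun p : ℝ × ℝ => fderiv ℝ (fun p : ℝ × ℝ => ψ p.1 p.2) p (1, 0) :=
    funext fun p => px_eq h p.1 p.2
  rw [this]; exact cont_fderiv_apply h _

lemma fderiv_zero_of_nmem (x t : ℝ)
    (hx : ((x, t) : ℝ × ℝ) ∉ tsupport (fun p : ℝ × ℝ => ψ p.1 p.2)) (v : ℝ × ℝ) :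
    fderiv ℝ (fun p : ℝ × ℝ => ψ p.1 p.2) (x, t) v = 0 := by
  have hev : (fun p : ℝ × ℝ => ψ p.1 p.2) =ᶠ[𝓝 ((x, t) : ℝ × ℝ)] fun _ => (0 : ℝ) := by
    filter_upwards [(isClosed_tsupport _).isOpen_compl.mem_nhds hx] with p hp
    exact image_eq_zero_of_notMem_tsupport (f := fun p : ℝ × ℝ => ψ p.1 p.2) hp
  have h0 : fderiv ℝ (fun p : ℝ × ℝ => ψ p.1 p.2) (x, t)
      = fderiv ℝ (fun _ : ℝ × ℝ => (0 : ℝ)) (x, t) := hev.fderiv_eq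
  rw [h0, fderiv_fun_const]; rfl

lemma hcs_pt (h : ContDiff ℝ (⊤ : ℕ∞) (fun p : ℝ × ℝ => ψ p.1 p.2))
    (hK : HasCompactSupport (fun p : ℝ × ℝ => ψ p.1 p.2)) :
    HasCompactSupport (fun p : ℝ × ℝ => pt ψ p.1 p.2) := by
  apply hK.mono'
  rintro ⟨y, s⟩ hp
  by_contra hmem
  apply hp
  show pt ψ y s = 0
  rw [pt_eq h y s]
  exact fderiv_zero_of_nmem y s hmem _

lemma hcs_px (h : ContDiff ℝ (⊤ : ℕ∞) (fun p : ℝ × ℝ => ψ p.1 p.2))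
    (hK : HasCompactSupport (fun p : ℝ × ℝ => ψ p.1 p.2)) :
    HasCompactSupport (fun p : ℝ × ℝ => px ψ p.1 p.2) := by
  apply hK.mono'
  rintro ⟨y, s⟩ hp
  by_contra hmem
  apply hp
  show px ψ y s = 0
  rw [px_eq h y s]
  exact fderiv_zero_of_nmem y s hmem _

/-- FTC in time over `(0,T)`. -/
lemma integral_pt_Ioo (h : ContDiff ℝ (⊤ : ℕ∞) (fun p : ℝ × ℝ => ψ p.1 p.2))
    {T : ℝ} (hT : 0 ≤ T) (x : ℝ) :
    ∫ t in Ioo (0:ℝ) T, pt ψ x t = ψ x T - ψ x 0 := by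
  rw [← integral_Ioc_eq_integral_Ioo, ← intervalIntegral.integral_of_le hT]
  exact intervalIntegral.integral_deriv_eq_sub
    (fun t _ => (hasDerivAt_slice_t h x t).differentiableAt)
    (((cont_pt h).comp (Continuous.prodMk_right x)).intervalIntegrable 0 T)

/-- FTC in space over `Iio 0`. -/
lemma integral_px_Iio (h : ContDiff ℝ (⊤ : ℕ∞) (fun p : ℝ × ℝ => ψ p.1 p.2))
    (hK : HasCompactSupport (fun p : ℝ × ℝ => ψ p.1 p.2)) (t : ℝ) :
    ∫ x in Iio (0:ℝ), px ψ x t = ψ 0 t := by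
  obtain ⟨R, hR⟩ := hK.isBounded.subset_closedBall 0
  set a : ℝ := -(max R 0 + 1) with ha
  have hmax : (0:ℝ) ≤ max R 0 := le_max_right _ _
  have haneg : a < 0 := by rw [ha]; linarith
  -- points with first coordinate ≤ a are outside the support
  have hout : ∀ y s : ℝ, y ≤ a → ((y, s) : ℝ × ℝ) ∉ tsupport (fun p : ℝ × ℝ => ψ p.1 p.2) := by
    intro y s hy hmem
    have := hR hmem
    rw [Metric.mem_closedBall, dist_zero_right, Prod.norm_def] at this
    have h1 : ‖y‖ ≤ R := le_trans (le_max_left _ _) this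
    rw [Real.norm_eq_abs] at h1
    have h2 : |y| ≥ max R 0 + 1 := by
      rw [abs_of_nonpos (le_trans hy haneg.le)]
      linarith [neg_le_neg hy]
    linarith [le_max_left R 0]
  have hpx0 : ∀ y s : ℝ, y ≤ a → px ψ y s = 0 := by
    intro y s hy
    rw [px_eq h y s]
    exact fderiv_zero_of_nmem y s (hout y s hy) _
  have hψa : ψ a t = 0 := image_eq_zero_of_notMem_tsupport
    (f := fun p : ℝ × ℝ => ψ p.1 p.2) (hout a t le_rfl)
  have hsub : ∫ x in Iio (0:ℝ), px ψ x t = ∫ x in Ioo a 0, px ψ x t := by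
    apply setIntegral_eq_of_subset_of_forall_diff_eq_zero measurableSet_Iio Ioo_subset_Iio_self
    intro y hy
    have : y ≤ a := by
      rcases hy with ⟨hy1, hy2⟩
      by_contra hcon
      exact hy2 ⟨lt_of_not_ge hcon, hy1⟩
    exact hpx0 y t this
  rw [hsub, ← integral_Ioc_eq_integral_Ioo, ← intervalIntegral.integral_of_le haneg.le]
  have hftc : ∫ x in a..(0:ℝ), px ψ x t = ψ 0 t - ψ a t :=
    intervalIntegral.integral_deriv_eq_sub
      (fun y _ => (hasDerivAt_slice_x h y t).differentiableAt)
      (((cont_px h).comp (Continuous.prodMk continuous_id continuous_const)).intervalIntegrable a 0)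
  rw [hftc, hψa, sub_zero]

/-- FTC in space over `Ioi 0`. -/
lemma integral_px_Ioi (h : ContDiff ℝ (⊤ : ℕ∞) (fun p : ℝ × ℝ => ψ p.1 p.2))
    (hK : HasCompactSupport (fun p : ℝ × ℝ => ψ p.1 p.2)) (t : ℝ) :
    ∫ x in Ioi (0:ℝ), px ψ x t = -ψ 0 t := by
  obtain ⟨R, hR⟩ := hK.isBounded.subset_closedBall 0
  set b : ℝ := max R 0 + 1 with hb
  have hmax : (0:ℝ) ≤ max R 0 := le_max_right _ _
  have hbpos : 0 < b := by rw [hb]; linarith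
  have hout : ∀ y s : ℝ, b ≤ y → ((y, s) : ℝ × ℝ) ∉ tsupport (fun p : ℝ × ℝ => ψ p.1 p.2) := by
    intro y s hy hmem
    have := hR hmem
    rw [Metric.mem_closedBall, dist_zero_right, Prod.norm_def] at this
    have h1 : ‖y‖ ≤ R := le_trans (le_max_left _ _) this
    rw [Real.norm_eq_abs, abs_of_nonneg (le_trans hbpos.le hy)] at h1
    have := le_max_left R 0
    linarith
  have hpx0 : ∀ y s : ℝ, b ≤ y → px ψ y s = 0 := by
    intro y s hy
    rw [px_eq h y s]
    exact fderiv_zero_of_nmem y s (hout y s hy) _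
  have hψb : ψ b t = 0 := image_eq_zero_of_notMem_tsupport
    (f := fun p : ℝ × ℝ => ψ p.1 p.2) (hout b t le_rfl)
  have hsub : ∫ x in Ioi (0:ℝ), px ψ x t = ∫ x in Ioo 0 b, px ψ x t := by
    apply setIntegral_eq_of_subset_of_forall_diff_eq_zero measurableSet_Ioi Ioo_subset_Ioi_self
    intro y hy
    have : b ≤ y := by
      rcases hy with ⟨hy1, hy2⟩
      by_contra hcon
      exact hy2 ⟨hy1, lt_of_not_ge hcon⟩
    exact hpx0 y t this
  rw [hsub, ← integral_Ioc_eq_integral_Ioo, ← intervalIntegral.integral_of_le hbpos.le]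
  have hftc : ∫ x in (0:ℝ)..b, px ψ x t = ψ b t - ψ 0 t :=
    intervalIntegral.integral_deriv_eq_sub
      (fun y _ => (hasDerivAt_slice_x h y t).differentiableAt)
      (((cont_px h).comp (Continuous.prodMk continuous_id continuous_const)).intervalIntegrable 0 b)
  rw [hftc, hψb, zero_sub]

/-- Fubini + FTC for the time term. -/
lemma key_t (h : ContDiff ℝ (⊤ : ℕ∞) (fun p : ℝ × ℝ => ψ p.1 p.2))
    (hK : HasCompactSupport (fun p : ℝ × ℝ => ψ p.1 p.2))
    {T : ℝ} (hT : 0 ≤ T) (hψT : ∀ x, ψ x T = 0)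
    (c : ℝ → ℝ) (hc : Measurable c) (M : ℝ) (hbd : ∀ x, |c x| ≤ M) :
    ∫ t in Ioo (0:ℝ) T, ∫ x : ℝ, c x * pt ψ x t = -∫ x : ℝ, c x * ψ x 0 := by
  have hg : Integrable (fun p : ℝ × ℝ => pt ψ p.1 p.2) (volume.prod volume) :=
    (cont_pt h).integrable_of_hasCompactSupport (hcs_pt h hK)
  have hswapg : Integrable (fun p : ℝ × ℝ => pt ψ p.2 p.1) (volume.prod volume) := hg.swap
  have hG : Integrable (fun p : ℝ × ℝ => c p.2 * pt ψ p.2 p.1) (volume.prod volume) := by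
    apply hswapg.bdd_mul (c := M) ((hc.comp measurable_snd).aestronglyMeasurable)
    exact Eventually.of_forall fun p => by rw [Real.norm_eq_abs]; exact hbd p.2
  have hGr : Integrable (fun p : ℝ × ℝ => c p.2 * pt ψ p.2 p.1)
      ((volume.restrict (Ioo (0:ℝ) T)).prod volume) := by
    rw [← Measure.restrict_univ (μ := (volume : Measure ℝ)), Measure.prod_restrict,
      Measure.restrict_univ]
    exact hG.restrict
  have hswap : (∫ t in Ioo (0:ℝ) T, ∫ x : ℝ, c x * pt ψ x t)
      = ∫ x : ℝ, ∫ t in Ioo (0:ℝ) T, c x * pt ψ x t :=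
    integral_integral_swap hGr
  rw [hswap]
  have hinner : ∀ x : ℝ, (∫ t in Ioo (0:ℝ) T, c x * pt ψ x t) = -(c x * ψ x 0) := by
    intro x
    rw [integral_const_mul, integral_pt_Ioo h hT x, hψT x, zero_sub, mul_neg]
  rw [show (fun x : ℝ => ∫ t in Ioo (0:ℝ) T, c x * pt ψ x t)
      = fun x : ℝ => -(c x * ψ x 0) from funext hinner]
  exact integral_neg _

end Aux

/-- For a continuous function on `[0,1]` which is strictly decreasing on `(0,b)`,
we have `f b ≤ f 0`. -/
lemma anti_le_zero {f : ℝ → ℝ} (hf : ContinuousOn f (Icc 0 1)) {b : ℝ}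
    (hb : b ∈ Ico (0:ℝ) 1) (hanti : StrictAntiOn f (Ioo 0 b)) : f b ≤ f 0 := by
  rcases eq_or_lt_of_le hb.1 with hb0 | hb0
  · rw [← hb0]
  set m := b / 2 with hm
  have hm0 : 0 < m := by positivity
  have hmb : m < b := by rw [hm]; linarith
  have hmIoo : m ∈ Ioo (0:ℝ) b := ⟨hm0, hmb⟩
  have hbmem : b ∈ Icc (0:ℝ) 1 := ⟨hb.1, hb.2.le⟩
  have h0mem : (0:ℝ) ∈ Icc (0:ℝ) 1 := ⟨le_rfl, zero_le_one⟩
  have hsub1 : Ioo m b ⊆ Icc (0:ℝ) 1 := fun y hy =>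
    ⟨le_trans hm0.le hy.1.le, le_trans hy.2.le hb.2.le⟩
  have hsub2 : Ioo (0:ℝ) m ⊆ Icc (0:ℝ) 1 := fun y hy =>
    ⟨hy.1.le, le_trans hy.2.le (le_trans hmb.le hb.2.le)⟩
  -- f b ≤ f m
  have h1 : f b ≤ f m := by
    have htend : Tendsto f (𝓝[Ioo m b] b) (𝓝 (f b)) :=
      ((hf.continuousWithinAt hbmem).mono hsub1)
    have hne : (𝓝[Ioo m b] b).NeBot := by
      rw [← mem_closure_iff_nhdsWithin_neBot, closure_Ioo hmb.ne]
      exact ⟨hmb.le, le_rfl⟩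
    refine le_of_tendsto htend ?_
    filter_upwards [self_mem_nhdsWithin] with y hy
    exact (hanti hmIoo ⟨lt_trans hm0 hy.1, hy.2⟩ hy.1).le
  -- f m ≤ f 0
  have h2 : f m ≤ f 0 := by
    have htend : Tendsto f (𝓝[Ioo 0 m] 0) (𝓝 (f 0)) :=
      ((hf.continuousWithinAt h0mem).mono hsub2)
    have hne : (𝓝[Ioo 0 m] 0).NeBot := by
      rw [← mem_closure_iff_nhdsWithin_neBot, closure_Ioo hm0.ne]
      exact ⟨le_rfl, hm0.le⟩
    refine ge_of_tendsto htend ?_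
    filter_upwards [self_mem_nhdsWithin] with y hy
    exact (hanti ⟨hy.1, lt_trans hy.2 hmb⟩ hmIoo hy.2).le
  linarith

/-- The two one-sided values of `kopt`, with flux continuity. -/
lemma kopt_spec (f₁ f₂ : ℝ → ℝ) (q : ℝ) (hq : 0 ≤ q)
    (hf₁c : ContinuousOn f₁ (Icc 0 1)) (hf₂c : ContinuousOn f₂ (Icc 0 1))
    (hf₁0 : f₁ 0 = 0) (hf₂0 : f₂ 0 = 0) (hf₁1 : f₁ 1 = q) (hf₂1 : f₂ 1 = q)
    (b₁ b₂ : ℝ) (hb₁ : b₁ ∈ Ico (0:ℝ) 1) (hb₂ : b₂ ∈ Ico (0:ℝ) 1)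
    (hanti₁ : StrictAntiOn f₁ (Ioo 0 b₁)) (hanti₂ : StrictAntiOn f₂ (Ioo 0 b₂)) :
    ∃ kL kR : ℝ, kL ∈ Icc (0:ℝ) 1 ∧ kR ∈ Icc (0:ℝ) 1 ∧ f₁ kL = f₂ kR ∧
      (∀ x : ℝ, x < 0 → kopt f₁ f₂ b₁ b₂ x = kL) ∧
      (∀ x : ℝ, 0 < x → kopt f₁ f₂ b₁ b₂ x = kR) ∧
      (∀ x : ℝ, kopt f₁ f₂ b₁ b₂ x ∈ Icc (0:ℝ) 1) := by
  have hmin₁ : f₁ b₁ ≤ 0 := hf₁0 ▸ anti_le_zero hf₁c hb₁ hanti₁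
  have hmin₂ : f₂ b₂ ≤ 0 := hf₂0 ▸ anti_le_zero hf₂c hb₂ hanti₂
  by_cases hc : f₁ b₁ ≤ f₂ b₂
  · -- kL = sInf A, kR = b₂
    set A := {ν ∈ Icc (0:ℝ) 1 | f₁ ν = f₂ b₂} with hA
    have hAclosed : IsClosed A := by
      have : A = Icc (0:ℝ) 1 ∩ f₁ ⁻¹' {f₂ b₂} := by
        ext ν; simp [hA]
      rw [this]
      exact hf₁c.preimage_isClosed_of_isClosed isClosed_Icc isClosed_singleton
    have hAne : A.Nonempty := by
      have hIcc : Icc (0:ℝ) b₁ ⊆ Icc (0:ℝ) 1 := Icc_subset_Icc le_rfl hb₁.2.le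
      have hIVT := intermediate_value_Icc' hb₁.1 (hf₁c.mono hIcc)
      have hmem : f₂ b₂ ∈ Icc (f₁ b₁) (f₁ 0) := ⟨hc, by rw [hf₁0]; exact hmin₂⟩
      obtain ⟨ν, hν, hfν⟩ := hIVT hmem
      exact ⟨ν, hIcc hν, hfν⟩
    have hAbdd : BddBelow A := ⟨0, fun ν hν => hν.1.1⟩
    have hAmem : sInf A ∈ A := hAclosed.csInf_mem hAne hAbdd
    refine ⟨sInf A, b₂, hAmem.1, ⟨hb₂.1, hb₂.2.le⟩, hAmem.2, ?_, ?_, ?_⟩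
    · intro x hx; unfold kopt; rw [if_pos hc, if_neg (not_lt.mpr hx.le)]
    · intro x hx; unfold kopt; rw [if_pos hc, if_pos hx]
    · intro x
      unfold kopt; rw [if_pos hc]
      by_cases hx : 0 < x
      · rw [if_pos hx]; exact ⟨hb₂.1, hb₂.2.le⟩
      · rw [if_neg hx]; exact hAmem.1
  · -- kL = b₁, kR = sSup B
    push_neg at hc
    set B := {ν ∈ Icc (0:ℝ) 1 | f₂ ν = f₁ b₁} with hB
    have hBclosed : IsClosed B := by
      have : B = Icc (0:ℝ) 1 ∩ f₂ ⁻¹' {f₁ b₁} := by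
        ext ν; simp [hB]
      rw [this]
      exact hf₂c.preimage_isClosed_of_isClosed isClosed_Icc isClosed_singleton
    have hBne : B.Nonempty := by
      have hIcc : Icc b₂ 1 ⊆ Icc (0:ℝ) 1 := Icc_subset_Icc hb₂.1 le_rfl
      have hIVT := intermediate_value_Icc hb₂.2.le (hf₂c.mono hIcc)
      have hmem : f₁ b₁ ∈ Icc (f₂ b₂) (f₂ 1) := ⟨hc.le, by rw [hf₂1]; linarith⟩
      obtain ⟨ν, hν, hfν⟩ := hIVT hmem
      exact ⟨ν, hIcc hν, hfν⟩
    have hBbdd : BddAbove B := ⟨1, fun ν hν => hν.1.2⟩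
    have hBmem : sSup B ∈ B := hBclosed.csSup_mem hBne hBbdd
    refine ⟨b₁, sSup B, ⟨hb₁.1, hb₁.2.le⟩, hBmem.1, hBmem.2.symm, ?_, ?_, ?_⟩
    · intro x hx; unfold kopt; rw [if_neg (not_le.mpr hc), if_pos hx]
    · intro x hx; unfold kopt; rw [if_neg (not_le.mpr hc), if_neg (not_lt.mpr hx.le)]
    · intro x
      unfold kopt; rw [if_neg (not_le.mpr hc)]
      by_cases hx : x < 0
      · rw [if_pos hx]; exact ⟨hb₁.1, hb₁.2.le⟩
      · rw [if_neg hx]; exact hBmem.1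

lemma kopt_measurable (f₁ f₂ : ℝ → ℝ) (b₁ b₂ : ℝ) :
    Measurable (kopt f₁ f₂ b₁ b₂) := by
  unfold kopt
  by_cases hc : f₁ b₁ ≤ f₂ b₂ <;> simp only [hc, if_true, if_false]
  · exact Measurable.ite (show MeasurableSet {x : ℝ | 0 < x} from measurableSet_Ioi)
      measurable_const measurable_const
  · exact Measurable.ite (show MeasurableSet {x : ℝ | x < 0} from measurableSet_Iio)
      measurable_const measurable_const

/-- the steady state `(x,t) ↦ κ_opt(x)` is an entropy solution with
initial datum `κ_opt`. -/
theorem kopt_is_entropy_solution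
    (f₁ f₂ : ℝ → ℝ) (q : ℝ) (hq : 0 ≤ q)
    (hf₁lip : ∃ L : ℝ≥0, LipschitzOnWith L f₁ (Icc 0 1))
    (hf₂lip : ∃ L : ℝ≥0, LipschitzOnWith L f₂ (Icc 0 1))
    (hf₁0 : f₁ 0 = 0) (hf₂0 : f₂ 0 = 0) (hf₁1 : f₁ 1 = q) (hf₂1 : f₂ 1 = q)
    (b₁ b₂ : ℝ) (hb₁ : b₁ ∈ Ico (0:ℝ) 1) (hb₂ : b₂ ∈ Ico (0:ℝ) 1)
    (hH1₁ : StrictAntiOn f₁ (Ioo 0 b₁) ∧ StrictMonoOn f₁ (Ioo b₁ 1))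
    (hH1₂ : StrictAntiOn f₂ (Ioo 0 b₂) ∧ StrictMonoOn f₂ (Ioo b₂ 1))
    (T : ℝ) (hT : 0 < T) :
    IsEntropySol f₁ f₂ b₁ b₂ T (kopt f₁ f₂ b₁ b₂) (fun x _ => kopt f₁ f₂ b₁ b₂ x) := by
  obtain ⟨L₁, hL₁⟩ := hf₁lip
  obtain ⟨L₂, hL₂⟩ := hf₂lip
  obtain ⟨kL, kR, hkLmem, hkRmem, hflux, hkL, hkR, hIcc⟩ :=
    kopt_spec f₁ f₂ q hq hL₁.continuousOn hL₂.continuousOn hf₁0 hf₂0 hf₁1 hf₂1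
      b₁ b₂ hb₁ hb₂ hH1₁.1 hH1₂.1
  have hmeas : Measurable (kopt f₁ f₂ b₁ b₂) := kopt_measurable f₁ f₂ b₁ b₂
  refine ⟨?_, ?_, ?_, ?_, ?_⟩
  · -- (1) bounds
    exact Eventually.of_forall fun p _ => hIcc p.1
  · -- (2) weak formulation
    intro ψ hψ
    obtain ⟨hsm, hK, hsupp⟩ := hψ
    have hψT : ∀ x, ψ x T = 0 := fun x => by
      by_contra h'; exact absurd (hsupp x T h').2 (lt_irrefl T)
    beta_reduce
    have hbd : ∀ x, |kopt f₁ f₂ b₁ b₂ x| ≤ 1 := fun x =>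
      abs_le.mpr ⟨by linarith [(hIcc x).1], (hIcc x).2⟩
    have h1 := key_t hsm hK hT.le hψT (kopt f₁ f₂ b₁ b₂) hmeas 1 hbd
    have h3 : (∫ t in Ioo (0:ℝ) T, ∫ x in Iio (0:ℝ),
        f₁ (kopt f₁ f₂ b₁ b₂ x) * px ψ x t)
        = ∫ t in Ioo (0:ℝ) T, f₁ kL * ψ 0 t := by
      apply integral_congr_ae (Eventually.of_forall ?_)
      intro t
      rw [← integral_px_Iio hsm hK t, ← integral_const_mul]
      apply setIntegral_congr_fun measurableSet_Iio
      intro x hx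
      dsimp only
      rw [hkL x hx]
    have h4 : (∫ t in Ioo (0:ℝ) T, ∫ x in Ioi (0:ℝ),
        f₂ (kopt f₁ f₂ b₁ b₂ x) * px ψ x t)
        = ∫ t in Ioo (0:ℝ) T, -(f₁ kL * ψ 0 t) := by
      apply integral_congr_ae (Eventually.of_forall ?_)
      intro t
      have : ∫ x in Ioi (0:ℝ), f₂ (kopt f₁ f₂ b₁ b₂ x) * px ψ x t
          = f₂ kR * ∫ x in Ioi (0:ℝ), px ψ x t := by
        rw [← integral_const_mul]
        apply setIntegral_congr_fun measurableSet_Ioi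
        intro x hx
        dsimp only
        rw [hkR x hx]
      rw [this, integral_px_Ioi hsm hK t, ← hflux]
      ring
    rw [h1, h3, h4, integral_neg]
    ring
  · -- (3) interior entropy, Ω₁
    intro ψ hψ hnn κ hκ
    obtain ⟨hsm, hK, hsupp⟩ := hψ
    have hψT : ∀ x, ψ x T = 0 := fun x => by
      by_contra h'; exact absurd (hsupp x T h').2 (lt_irrefl T)
    have hψ0 : ∀ t, ψ 0 t = 0 := fun t => by
      by_contra h'; exact lt_irrefl (0:ℝ) (mem_Iio.mp (hsupp 0 t h').1)
    beta_reduce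
    set c := |kL - κ| with hc
    set cind := (Iio (0:ℝ)).indicator (fun _ => c) with hcind
    have hcind_meas : Measurable cind := measurable_const.indicator measurableSet_Iio
    have hcind_bd : ∀ x, |cind x| ≤ c := by
      intro x
      by_cases hx : x ∈ Iio (0:ℝ)
      · rw [hcind, indicator_of_mem hx, abs_abs]
      · rw [hcind, indicator_of_notMem hx, abs_zero]; exact abs_nonneg _
    have hptw : ∀ (g : ℝ → ℝ) (x : ℝ),
        (Iio (0:ℝ)).indicator (fun x => |kopt f₁ f₂ b₁ b₂ x - κ| * g x) x
        = cind x * g x := by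
      intro g x
      by_cases hx : x ∈ Iio (0:ℝ)
      · rw [indicator_of_mem hx, hcind, indicator_of_mem hx, hkL x hx]
      · rw [indicator_of_notMem hx, hcind, indicator_of_notMem hx, zero_mul]
    have hA : (∫ t in Ioo (0:ℝ) T, ∫ x in Iio (0:ℝ),
        |kopt f₁ f₂ b₁ b₂ x - κ| * pt ψ x t)
        = -∫ x : ℝ, cind x * ψ x 0 := by
      rw [← key_t hsm hK hT.le hψT cind hcind_meas c hcind_bd]
      apply integral_congr_ae (Eventually.of_forall ?_)
      intro t
      rw [← integral_indicator measurableSet_Iio]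
      exact integral_congr_ae (Eventually.of_forall fun x => hptw _ x)
    have hB : (∫ x in Iio (0:ℝ), |kopt f₁ f₂ b₁ b₂ x - κ| * ψ x 0)
        = ∫ x : ℝ, cind x * ψ x 0 := by
      rw [← integral_indicator measurableSet_Iio]
      exact integral_congr_ae (Eventually.of_forall fun x => hptw _ x)
    have hC : (∫ t in Ioo (0:ℝ) T, ∫ x in Iio (0:ℝ),
        Fent f₁ (kopt f₁ f₂ b₁ b₂ x) κ * px ψ x t) = 0 := by
      have : ∀ t : ℝ, (∫ x in Iio (0:ℝ), Fent f₁ (kopt f₁ f₂ b₁ b₂ x) κ * px ψ x t) = 0 := by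
        intro t
        have : ∫ x in Iio (0:ℝ), Fent f₁ (kopt f₁ f₂ b₁ b₂ x) κ * px ψ x t
            = Fent f₁ kL κ * ∫ x in Iio (0:ℝ), px ψ x t := by
          rw [← integral_const_mul]
          apply setIntegral_congr_fun measurableSet_Iio
          intro x hx
          dsimp only
          rw [hkL x hx]
        rw [this, integral_px_Iio hsm hK t, hψ0 t, mul_zero]
      rw [show (fun t => ∫ x in Iio (0:ℝ), Fent f₁ (kopt f₁ f₂ b₁ b₂ x) κ * px ψ x t)
          = fun _ : ℝ => (0:ℝ) from funext this]
      exact integral_zero _ _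
    rw [hA, hB, hC]
    simp
  · -- (3) interior entropy, Ω₂
    intro ψ hψ hnn κ hκ
    obtain ⟨hsm, hK, hsupp⟩ := hψ
    have hψT : ∀ x, ψ x T = 0 := fun x => by
      by_contra h'; exact absurd (hsupp x T h').2 (lt_irrefl T)
    have hψ0 : ∀ t, ψ 0 t = 0 := fun t => by
      by_contra h'; exact lt_irrefl (0:ℝ) (mem_Ioi.mp (hsupp 0 t h').1)
    beta_reduce
    set c := |kR - κ| with hc
    set cind := (Ioi (0:ℝ)).indicator (fun _ => c) with hcind
    have hcind_meas : Measurable cind := measurable_const.indicator measurableSet_Ioi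
    have hcind_bd : ∀ x, |cind x| ≤ c := by
      intro x
      by_cases hx : x ∈ Ioi (0:ℝ)
      · rw [hcind, indicator_of_mem hx, abs_abs]
      · rw [hcind, indicator_of_notMem hx, abs_zero]; exact abs_nonneg _
    have hptw : ∀ (g : ℝ → ℝ) (x : ℝ),
        (Ioi (0:ℝ)).indicator (fun x => |kopt f₁ f₂ b₁ b₂ x - κ| * g x) x
        = cind x * g x := by
      intro g x
      by_cases hx : x ∈ Ioi (0:ℝ)
      · rw [indicator_of_mem hx, hcind, indicator_of_mem hx, hkR x hx]
      · rw [indicator_of_notMem hx, hcind, indicator_of_notMem hx, zero_mul]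
    have hA : (∫ t in Ioo (0:ℝ) T, ∫ x in Ioi (0:ℝ),
        |kopt f₁ f₂ b₁ b₂ x - κ| * pt ψ x t)
        = -∫ x : ℝ, cind x * ψ x 0 := by
      rw [← key_t hsm hK hT.le hψT cind hcind_meas c hcind_bd]
      apply integral_congr_ae (Eventually.of_forall ?_)
      intro t
      rw [← integral_indicator measurableSet_Ioi]
      exact integral_congr_ae (Eventually.of_forall fun x => hptw _ x)
    have hB : (∫ x in Ioi (0:ℝ), |kopt f₁ f₂ b₁ b₂ x - κ| * ψ x 0)
        = ∫ x : ℝ, cind x * ψ x 0 := by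
      rw [← integral_indicator measurableSet_Ioi]
      exact integral_congr_ae (Eventually.of_forall fun x => hptw _ x)
    have hC : (∫ t in Ioo (0:ℝ) T, ∫ x in Ioi (0:ℝ),
        Fent f₂ (kopt f₁ f₂ b₁ b₂ x) κ * px ψ x t) = 0 := by
      have : ∀ t : ℝ, (∫ x in Ioi (0:ℝ), Fent f₂ (kopt f₁ f₂ b₁ b₂ x) κ * px ψ x t) = 0 := by
        intro t
        have : ∫ x in Ioi (0:ℝ), Fent f₂ (kopt f₁ f₂ b₁ b₂ x) κ * px ψ x t
            = Fent f₂ kR κ * ∫ x in Ioi (0:ℝ), px ψ x t := by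
          rw [← integral_const_mul]
          apply setIntegral_congr_fun measurableSet_Ioi
          intro x hx
          dsimp only
          rw [hkR x hx]
        rw [this, integral_px_Ioi hsm hK t, hψ0 t, neg_zero, mul_zero]
      rw [show (fun t => ∫ x in Ioi (0:ℝ), Fent f₂ (kopt f₁ f₂ b₁ b₂ x) κ * px ψ x t)
          = fun _ : ℝ => (0:ℝ) from funext this]
      exact integral_zero _ _
    rw [hA, hB, hC]
    simp
  · -- (4) interface entropy inequality
    intro ψ hψ hnn
    simp [Fent]
end
end

section
/- Let f₁ : [0,1] → ℝ be Lipschitz with f₁(0) = 0, decreasing on (0,b₁) and increasing on (b₁,1) for some b₁ ∈ [0,1), let λ₁ : [0,1] → [0,∞) be Lipschitz with λ₁(0) = λ₁(1) = 0 and λ₁ > 0 on (0,1), and set φ₁(u) = ∫₀^u λ₁(s) ds. Let z ∈ (0, f₁(1)) and let κ̄ = max{ν ∈ [0,1] : f₁(ν) = z} (by monotonicity κ̄ is the unique point of (b₁,1) with f₁(κ̄) = z). Then there exists a nonincreasing function y : [0,∞) → [κ̄, 1] with y(0) = 1 which solves the ordinary differential equation (d/dx) φ₁(y(x)) = z − f₁(y(x))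 for x > 0, and y(x) → κ̄ as x → +∞. -/
open MeasureTheory Set Filter Topology
open scoped NNReal

/-!
Separation of variables. Since `f₁ > z` on `(κ, 1]`, the function
`G u = ∫ s in u..1, λ₁ s / (f₁ s - z)` is continuous and strictly decreasing on `(κ, 1]` with
`G 1 = 0`. Near `κ` we have `λ₁ ≥ c > 0` and, by the Lipschitz bound, `f₁ s - z ≤ L (s - κ)`, so the
integrand dominates a multiple of `1 / (s - κ)` and `G → ∞` at `κ⁺`. Hence `G` maps `(κ, 1]` onto
`[0, ∞)`; its inverse `y` has `y' = -(f₁ (y) - z) / λ₁ (y)`, which is the ODE for `φ₁ ∘ y`.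
-/

theorem StrictAntiOn.antitoneOn_of_rightInvOn {α β : Type*} [LinearOrder α] [Preorder β]
    {G : α → β} {y : β → α} {s : Set α} {t : Set β} (hG : StrictAntiOn G s)
    (hy : MapsTo y t s) (hyG : RightInvOn y G t) : AntitoneOn y t := by
  intro x hx x' hx' hxx'
  by_contra! h
  have := hG (hy hx) (hy hx') h
  rw [hyG hx, hyG hx'] at this
  exact this.not_ge hxx'

section RightInverse

variable {G y : ℝ → ℝ} {a b : ℝ}

theorem surjOn_Ioc_Ici_of_tendsto_atTop (hab : a < b) (hGc : ContinuousOn G (Ioc a b))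
    (hGb : G b = 0) (hGa : Tendsto G (𝓝[>] a) atTop) : SurjOn G (Ioc a b) (Ici 0) := by
  intro x hx
  obtain ⟨w, hxw, hw⟩ := ((hGa.eventually_gt_atTop x).and (Ioo_mem_nhdsGT hab)).exists
  obtain ⟨u, hu, rfl⟩ := intermediate_value_Icc' hw.2.le
    (hGc.mono (Icc_subset_Ioc hw.1 le_rfl)) ⟨hGb ▸ hx, hxw.le⟩
  exact ⟨u, Icc_subset_Ioc hw.1 le_rfl hu, rfl⟩

theorem mem_Ioo_of_rightInvOn (hGb : G b = 0) (hy : MapsTo y (Ici 0) (Ioc a b))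
    (hyG : RightInvOn y G (Ici 0)) {x : ℝ} (hx : 0 < x) : y x ∈ Ioo a b := by
  refine ⟨(hy hx.le).1, (hy hx.le).2.lt_of_ne fun h => hx.ne ?_⟩
  rw [← hyG (mem_Ici.2 hx.le), h, hGb]

theorem Ioo_subset_image_Ioi_of_rightInvOn (hG : StrictAntiOn G (Ioc a b)) (hGb : G b = 0)
    (hy : MapsTo y (Ici 0) (Ioc a b)) (hyG : RightInvOn y G (Ici 0)) :
    Ioo a b ⊆ y '' Ioi 0 := by
  intro u hu
  have hb : b ∈ Ioc a b := ⟨hu.1.trans hu.2, le_rfl⟩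
  have hGu : 0 < G u := hGb ▸ hG (Ioo_subset_Ioc_self hu) hb hu.2
  exact ⟨G u, hGu, hG.injOn (hy (mem_Ici.2 hGu.le)) (Ioo_subset_Ioc_self hu) (hyG hGu.le)⟩

theorem continuousAt_of_rightInvOn (hG : StrictAntiOn G (Ioc a b)) (hGb : G b = 0)
    (hy : MapsTo y (Ici 0) (Ioc a b)) (hyG : RightInvOn y G (Ici 0)) {x : ℝ} (hx : 0 < x) :
    ContinuousAt y x := by
  have himage : y '' Ici 0 ∈ 𝓝 (y x) :=
    mem_of_superset (Ioo_mem_nhds (mem_Ioo_of_rightInvOn hGb hy hyG hx).1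
      (mem_Ioo_of_rightInvOn hGb hy hyG hx).2)
      ((Ioo_subset_image_Ioi_of_rightInvOn hG hGb hy hyG).trans (image_mono Ioi_subset_Ici_self))
  -- `y` is antitone, i.e. monotone into `ℝᵒᵈ`, which carries the same topology
  exact continuousAt_of_monotoneOn_of_image_mem_nhds (β := ℝᵒᵈ)
    (hG.antitoneOn_of_rightInvOn hy hyG) (Ici_mem_nhds hx) himage

theorem hasDerivAt_of_rightInvOn (hG : StrictAntiOn G (Ioc a b)) (hGb : G b = 0)
    (hy : MapsTo y (Ici 0) (Ioc a b)) (hyG : RightInvOn y G (Ici 0)) {x G' : ℝ} (hx : 0 < x)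
    (hG' : HasDerivAt G G' (y x)) (hG'0 : G' ≠ 0) : HasDerivAt y G'⁻¹ x :=
  hG'.of_local_left_inverse (continuousAt_of_rightInvOn hG hGb hy hyG hx) hG'0 <|
    (eventually_ge_nhds hx).mono fun _ ht => hyG ht

theorem tendsto_atTop_of_rightInvOn (hG : StrictAntiOn G (Ioc a b)) (hab : a < b)
    (hGb : G b = 0) (hy : MapsTo y (Ici 0) (Ioc a b)) (hyG : RightInvOn y G (Ici 0)) :
    Tendsto y atTop (𝓝 a) := by
  refine tendsto_order.2 ⟨fun a' ha' => ?_, fun a' ha' => ?_⟩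
  · filter_upwards [eventually_ge_atTop 0] with x hx using ha'.trans (hy hx).1
  · obtain ⟨u, hau, hu⟩ := exists_between (lt_min ha' hab)
    have hu' : u ∈ Ioc a b := ⟨hau, (hu.trans_le (min_le_right _ _)).le⟩
    have hGu : 0 ≤ G u := hGb ▸ hG.antitoneOn hu' ⟨hab, le_rfl⟩ hu'.2
    filter_upwards [eventually_gt_atTop (G u)] with x hx
    have hx0 : x ∈ Ici 0 := hGu.trans hx.le
    refine ((hG.lt_iff_gt hu' (hy hx0)).1 ?_).trans (hu.trans_le (min_le_left _ _))
    rwa [hyG hx0]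

end RightInverse

theorem hasDerivAt_integral_of_continuousOn {f : ℝ → ℝ} {s : Set ℝ} {c u : ℝ}
    (hf : ContinuousOn f s) (hcu : uIcc c u ⊆ s) (hs : s ∈ 𝓝 u) :
    HasDerivAt (fun v => ∫ r in c..v, f r) (f u) u :=
  intervalIntegral.integral_hasDerivAt_right (hf.mono hcu).intervalIntegrable
    ((hf.mono interior_subset).stronglyMeasurableAtFilter isOpen_interior u
      (mem_interior_iff_mem_nhds.2 hs))
    (hf.continuousAt hs)

section TailIntegral

variable {g : ℝ → ℝ} {a b : ℝ}

theorem hasDerivAt_integral_Ioc (hg : ContinuousOn g (Ioc a b)) {u : ℝ} (hu : u ∈ Ioo a b) :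
    HasDerivAt (fun v => ∫ s in v..b, g s) (-g u) u := by
  simp only [intervalIntegral.integral_symm b]
  exact (hasDerivAt_integral_of_continuousOn hg
    (ordConnected_Ioc.uIcc_subset ⟨hu.1.trans hu.2, le_rfl⟩ (Ioo_subset_Ioc_self hu))
    (mem_of_superset (Ioo_mem_nhds hu.1 hu.2) Ioo_subset_Ioc_self)).neg

theorem continuousOn_integral_Ioc (hg : ContinuousOn g (Ioc a b)) :
    ContinuousOn (fun u => ∫ s in u..b, g s) (Ioc a b) := by
  refine continuousOn_of_locally_continuousOn fun u hu => ?_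
  obtain ⟨w, haw, hwu⟩ := exists_between hu.1
  have hwb : uIcc w b = Icc w b := uIcc_of_le (hwu.le.trans hu.2)
  have hcont := intervalIntegral.continuousOn_primitive_interval_left (μ := volume)
    (hwb ▸ (hg.mono (Icc_subset_Ioc haw le_rfl)).integrableOn_Icc)
  rw [hwb] at hcont
  exact ⟨Ioi w, isOpen_Ioi, hwu, hcont.mono fun v hv => ⟨hv.2.le, hv.1.2⟩⟩

theorem strictAntiOn_integral_Ioc (hg : ContinuousOn g (Ioc a b))
    (hpos : ∀ s ∈ Ioo a b, 0 < g s) : StrictAntiOn (fun u => ∫ s in u..b, g s) (Ioc a b) := by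
  intro u hu v hv huv
  have hint : ∀ {p q}, p ∈ Ioc a b → q ∈ Ioc a b → IntervalIntegrable g volume p q :=
    fun hp hq => (hg.mono (ordConnected_Ioc.uIcc_subset hp hq)).intervalIntegrable
  have hsplit := intervalIntegral.integral_add_adjacent_intervals (hint hu hv)
    (hint hv ⟨hv.1.trans_le hv.2, le_rfl⟩)
  have hpos := intervalIntegral.intervalIntegral_pos_of_pos_on (hint hu hv)
    (fun s hs => hpos s ⟨hu.1.trans hs.1, hs.2.trans_le hv.2⟩) huv
  simp only
  linarith

theorem tendsto_integral_nhdsGT_atTop (hg : ContinuousOn g (Ioc a b)) (hab : a < b) {c : ℝ}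
    (hc : 0 < c) (hle : ∀ᶠ s in 𝓝[>] a, c / (s - a) ≤ g s) :
    Tendsto (fun u => ∫ s in u..b, g s) (𝓝[>] a) atTop := by
  obtain ⟨v', hv', hv's⟩ := mem_nhdsGT_iff_exists_Ioc_subset.1 hle
  set v := min v' b
  have hav : a < v := lt_min hv' hab
  have hint : ∀ {p q}, p ∈ Ioc a b → q ∈ Ioc a b → IntervalIntegrable g volume p q :=
    fun hp hq => (hg.mono (ordConnected_Ioc.uIcc_subset hp hq)).intervalIntegrable
  have hlog : Tendsto (fun u => c * (Real.log (v - a) - Real.log (u - a)) + ∫ s in v..b, g s)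
      (𝓝[>] a) atTop := by
    refine tendsto_atTop_add_const_right _ _ (Tendsto.const_mul_atTop hc ?_)
    refine tendsto_atTop_add_const_left _ _ (tendsto_neg_atBot_atTop.comp ?_)
    refine Real.tendsto_log_nhdsGT_zero.comp (tendsto_nhdsWithin_iff.2 ⟨?_, ?_⟩)
    · simpa using (continuous_sub_right a).continuousWithinAt.tendsto (s := Ioi a) (x := a)
    · filter_upwards [self_mem_nhdsWithin] with u hu using sub_pos.2 (mem_Ioi.1 hu)
  refine tendsto_atTop_mono' _ ?_ hlog
  filter_upwards [Ioo_mem_nhdsGT hav] with u hu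
  have hub : u ∈ Ioc a b := ⟨hu.1, hu.2.le.trans (min_le_right _ _)⟩
  have hvb : v ∈ Ioc a b := ⟨hav, min_le_right _ _⟩
  have hcomp : ∫ s in u..v, c / (s - a) = c * (Real.log (v - a) - Real.log (u - a)) := by
    simp_rw [div_eq_mul_inv, intervalIntegral.integral_const_mul,
      intervalIntegral.integral_comp_sub_right (fun s => s⁻¹) a,
      integral_inv_of_pos (sub_pos.2 hu.1) (sub_pos.2 hav),
      Real.log_div (sub_pos.2 hav).ne' (sub_pos.2 hu.1).ne']
  rw [← intervalIntegral.integral_add_adjacent_intervals (hint hub hvb) (hint hvb ⟨hab, le_rfl⟩),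
    ← hcomp]
  refine add_le_add_left (intervalIntegral.integral_mono_on hu.2.le ?_ (hint hub hvb)
    fun s hs => hv's ⟨hu.1.trans_le hs.1, hs.2.trans (min_le_left _ _)⟩) _
  refine ContinuousOn.intervalIntegrable fun s hs => ?_
  rw [uIcc_of_le hu.2.le] at hs
  exact continuousWithinAt_const.div ((continuous_sub_right a).continuousWithinAt)
    (sub_pos.2 (hu.1.trans_le hs.1)).ne'

theorem exists_antitoneOn_hasDerivAt_neg_inv (hab : a < b) (hg : ContinuousOn g (Ioc a b))
    (hpos : ∀ s ∈ Ioo a b, 0 < g s) {c : ℝ} (hc : 0 < c)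
    (hle : ∀ᶠ s in 𝓝[>] a, c / (s - a) ≤ g s) :
    ∃ y : ℝ → ℝ, AntitoneOn y (Ici 0) ∧ MapsTo y (Ici 0) (Ioc a b) ∧ y 0 = b ∧
      (∀ x > 0, y x ∈ Ioo a b ∧ HasDerivAt y (-g (y x))⁻¹ x) ∧ Tendsto y atTop (𝓝 a) := by
  set G := fun u => ∫ s in u..b, g s
  have hG : StrictAntiOn G (Ioc a b) := strictAntiOn_integral_Ioc hg hpos
  have hGb : G b = 0 := intervalIntegral.integral_same
  have hGsurj : SurjOn G (Ioc a b) (Ici 0) :=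
    surjOn_Ioc_Ici_of_tendsto_atTop hab (continuousOn_integral_Ioc hg) hGb
      (tendsto_integral_nhdsGT_atTop hg hab hc hle)
  set y := Function.invFunOn G (Ioc a b)
  have hy : MapsTo y (Ici 0) (Ioc a b) := hGsurj.mapsTo_invFunOn
  have hyG : RightInvOn y G (Ici 0) := hGsurj.rightInvOn_invFunOn
  have hy0 : y 0 = b :=
    hG.injOn (hy (mem_Ici.2 le_rfl)) ⟨hab, le_rfl⟩ ((hyG (mem_Ici.2 le_rfl)).trans hGb.symm)
  refine ⟨y, hG.antitoneOn_of_rightInvOn hy hyG, hy, hy0, fun x hx => ?_,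
    tendsto_atTop_of_rightInvOn hG hab hGb hy hyG⟩
  have hyx := mem_Ioo_of_rightInvOn hGb hy hyG hx
  exact ⟨hyx, hasDerivAt_of_rightInvOn hG hGb hy hyG hx (hasDerivAt_integral_Ioc hg hyx)
    (neg_ne_zero.2 (hpos _ hyx).ne')⟩

end TailIntegral

theorem ContinuousOn.lt_of_mem_Ioc_of_forall_eq_le {f : ℝ → ℝ} {κ b z : ℝ}
    (hf : ContinuousOn f (Icc κ b)) (hzb : z < f b) (hmax : ∀ ν ∈ Icc κ b, f ν = z → ν ≤ κ)
    {s : ℝ} (hs : s ∈ Ioc κ b) : z < f s := by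
  by_contra! hfs
  have hsub : Icc s b ⊆ Icc κ b := Icc_subset_Icc hs.1.le le_rfl
  obtain ⟨t, ht, hft⟩ := intermediate_value_Icc hs.2 (hf.mono hsub) ⟨hfs, hzb.le⟩
  exact (hs.1.trans_le ht.1).not_ge (hmax t (hsub ht) hft)

theorem LipschitzOnWith.exists_div_sub_le_div_sub {f lam : ℝ → ℝ} {L : ℝ≥0} {s : Set ℝ}
    {κ : ℝ} (hf : LipschitzOnWith L f s) (hs : s ∈ 𝓝 κ) (hlam : ContinuousAt lam κ)
    (hlamκ : 0 < lam κ) (hfκ : ∀ᶠ t in 𝓝[>] κ, f κ < f t) :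
    ∃ c > 0, ∀ᶠ t in 𝓝[>] κ, c / (t - κ) ≤ lam t / (f t - f κ) := by
  refine ⟨lam κ / 2 / (L + 1), by positivity, ?_⟩
  filter_upwards [hfκ, nhdsWithin_le_nhds (hlam.eventually (lt_mem_nhds (half_lt_self hlamκ))),
    nhdsWithin_le_nhds hs, self_mem_nhdsWithin] with t hft hlamt hts htκ
  have hlip : f t - f κ ≤ (L + 1) * (t - κ) := by
    have := hf.dist_le_mul t hts κ (mem_of_mem_nhds hs)
    rw [Real.dist_eq, Real.dist_eq, abs_of_pos (sub_pos.2 hft),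
      abs_of_pos (sub_pos.2 (mem_Ioi.1 htκ))] at this
    nlinarith [sub_pos.2 (mem_Ioi.1 htκ)]
  rw [div_div]
  exact div_le_div₀ ((half_pos hlamκ).le.trans hlamt.le) hlamt.le (sub_pos.2 hft) hlip

theorem steady_ode_solution_general
    (f₁ lam₁ φ₁ : ℝ → ℝ)
    (hf₁lip : ∃ L : ℝ≥0, LipschitzOnWith L f₁ (Icc 0 1)) (hf₁0 : f₁ 0 = 0)
    (hlamlip : ∃ L : ℝ≥0, LipschitzOnWith L lam₁ (Icc 0 1))
    (hlampos : ∀ s ∈ Ioo (0:ℝ) 1, 0 < lam₁ s)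
    (hφdef : ∀ s : ℝ, φ₁ s = ∫ r in (0:ℝ)..s, lam₁ r)
    (z : ℝ) (hz : 0 < z) (hz' : z < f₁ 1)
    (κ : ℝ) (hκmem : κ ∈ Icc (0:ℝ) 1) (hκval : f₁ κ = z)
    (hκmax : ∀ ν ∈ Icc (0:ℝ) 1, f₁ ν = z → ν ≤ κ) :
    ∃ y : ℝ → ℝ, AntitoneOn y (Ici 0) ∧ (∀ x ∈ Ici (0:ℝ), y x ∈ Icc κ 1) ∧ y 0 = 1 ∧
      (∀ x > (0:ℝ), HasDerivAt (fun s => φ₁ (y s)) (z - f₁ (y x)) x) ∧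
      Tendsto y atTop (𝓝 κ) := by
  obtain ⟨Lf, hLf⟩ := hf₁lip
  have hlam : ContinuousOn lam₁ (Icc 0 1) := hlamlip.elim fun _ h => h.continuousOn
  have hκ0 : 0 < κ := hκmem.1.lt_of_ne (by rintro rfl; linarith)
  have hκ1 : κ < 1 := hκmem.2.lt_of_ne (by rintro rfl; linarith)
  have hκ : Icc 0 1 ∈ 𝓝 κ := Icc_mem_nhds hκ0 hκ1
  have hsub : Icc κ 1 ⊆ Icc 0 1 := Icc_subset_Icc hκmem.1 le_rfl
  have hfz : ∀ s ∈ Ioc κ 1, z < f₁ s := fun s =>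
    (hLf.continuousOn.mono hsub).lt_of_mem_Ioc_of_forall_eq_le hz' fun ν hν => hκmax ν (hsub hν)
  set g := fun s => lam₁ s / (f₁ s - z)
  have hg : ContinuousOn g (Ioc κ 1) :=
    (hlam.mono (Ioc_subset_Icc_self.trans hsub)).div
      ((hLf.continuousOn.mono (Ioc_subset_Icc_self.trans hsub)).sub continuousOn_const)
      fun s hs => (sub_pos.2 (hfz s hs)).ne'
  have hgpos : ∀ s ∈ Ioo κ 1, 0 < g s := fun s hs =>
    div_pos (hlampos s ⟨hκ0.trans hs.1, hs.2⟩) (sub_pos.2 (hfz s (Ioo_subset_Ioc_self hs)))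
  obtain ⟨c, hc, hgc⟩ := hLf.exists_div_sub_le_div_sub hκ (hlam.continuousAt hκ)
    (hlampos κ ⟨hκ0, hκ1⟩) (hκval ▸ mem_of_superset (Ioc_mem_nhdsGT hκ1) hfz)
  obtain ⟨y, hanti, hmaps, hy0, hderiv, hlim⟩ := exists_antitoneOn_hasDerivAt_neg_inv hκ1 hg
    hgpos hc (hgc.mono fun t ht => by rwa [hκval] at ht)
  refine ⟨y, hanti, fun x hx => Ioc_subset_Icc_self (hmaps hx), hy0, fun x hx => ?_, hlim⟩
  obtain ⟨hyx, hy'⟩ := hderiv x hx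
  have hyx' : y x ∈ Ioo 0 1 := ⟨hκ0.trans hyx.1, hyx.2⟩
  have hφ : HasDerivAt φ₁ (lam₁ (y x)) (y x) := by
    rw [funext hφdef]
    exact hasDerivAt_integral_of_continuousOn hlam
      (uIcc_subset_Icc (left_mem_Icc.2 zero_le_one) (Ioo_subset_Icc_self hyx'))
      (Icc_mem_nhds hyx'.1 hyx'.2)
  refine (hφ.comp x hy').congr_deriv ?_
  rw [inv_neg, inv_div, mul_neg, mul_div_cancel₀ _ (hlampos _ hyx').ne', neg_sub]

/-- the ODE connecting `1` to `κ̄` at the interface.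
There is a nonincreasing solution `y` on `[0,∞)` of `(φ₁ ∘ y)' = z - f₁(y)`, `y(0) = 1`,
with values in `[κ̄, 1]`, converging to `κ̄` at `+∞`. -/
theorem steady_ode_solution
    (f₁ lam₁ φ₁ : ℝ → ℝ)
    (hf₁lip : ∃ L : ℝ≥0, LipschitzOnWith L f₁ (Icc 0 1)) (hf₁0 : f₁ 0 = 0)
    (b₁ : ℝ) (hb₁ : b₁ ∈ Ico (0:ℝ) 1)
    (hH1 : StrictAntiOn f₁ (Ioo 0 b₁) ∧ StrictMonoOn f₁ (Ioo b₁ 1))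
    (hlamlip : ∃ L : ℝ≥0, LipschitzOnWith L lam₁ (Icc 0 1))
    (hlam0 : lam₁ 0 = 0) (hlam1 : lam₁ 1 = 0)
    (hlampos : ∀ s ∈ Ioo (0:ℝ) 1, 0 < lam₁ s)
    (hφdef : ∀ s : ℝ, φ₁ s = ∫ r in (0:ℝ)..s, lam₁ r)
    (z : ℝ) (hz : 0 < z) (hz' : z < f₁ 1)
    (κ : ℝ) (hκmem : κ ∈ Icc (0:ℝ) 1) (hκval : f₁ κ = z)
    (hκmax : ∀ ν ∈ Icc (0:ℝ) 1, f₁ ν = z → ν ≤ κ) :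
    ∃ y : ℝ → ℝ, AntitoneOn y (Ici 0) ∧ (∀ x ∈ Ici (0:ℝ), y x ∈ Icc κ 1) ∧ y 0 = 1 ∧
      (∀ x > (0:ℝ), HasDerivAt (fun s => φ₁ (y s)) (z - f₁ (y x)) x) ∧
      Tendsto y atTop (𝓝 κ) :=
  steady_ode_solution_general f₁ lam₁ φ₁ hf₁lip hf₁0 hlamlip hlampos hφdef z hz hz' κ hκmem hκval
    hκmax
end
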